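/- arXiv:1610.05792 — 6 statements merged into one kernel-verified Lean document; each statement's English description precedes it below -/
import Mathlib

section
/- Suppose for every x, the map z ↦ ∇f(x;z) is L_z-Lipschitz in z, and z ∼ p has finite second moment with mean z̄. Then for every x, E_z ||∇f(x;z) - ∇ℓ(x)||^2 ≤ 4 L_z^2 Tr Var_z(z), where ∇ℓ(x) = E_z[∇f(x;z)]. Consequently, for a batch B of i.i.d. samples, E_B ||∇ℓ_B(x) - ∇ℓ(x)||^2 ≤ 4 L_z^2 Tr Var_z(z) / |B|, uniformly in x. -/
/-!
The mean minimises the mean squared deviation from a point, so comparing `∇f(x;z)` with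
`∇f(x;z̄)` and using the Lipschitz bound gives
`E‖∇f(x;z) - ∇ℓ(x)‖² ≤ E‖∇f(x;z) - ∇f(x;z̄)‖² ≤ L_z² E‖z - z̄‖²`.
For a batch, each coordinate of the batch mean is the average of `|B|` independent copies of
the same real random variable, so its variance is that of one sample divided by `|B|`;
summing the coordinate variances gives the total variance.
-/

open MeasureTheory ProbabilityTheory

section Coordinates

variable {Ω ι : Type*} [MeasurableSpace Ω] {μ : Measure Ω} [Fintype ι]
  {g : Ω → EuclideanSpace ℝ ι}

lemma integral_norm_sq_sub_eq_sum [IsFiniteMeasure μ] (hg : MemLp g 2 μ)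
    (c : EuclideanSpace ℝ ι) :
    ∫ ω, ‖g ω - c‖ ^ 2 ∂μ = ∑ k, ∫ ω, (g ω k - c k) ^ 2 ∂μ := by
  simp_rw [EuclideanSpace.real_norm_sq_eq, PiLp.sub_apply]
  exact integral_finsetSum _ fun k _ => ((hg.eval_piLp k).sub (memLp_const (c k))).integrable_sq

lemma integral_norm_sq_sub_integral_eq_sum_variance [IsFiniteMeasure μ] (hg : MemLp g 2 μ) :
    ∫ ω, ‖g ω - ∫ ω', g ω' ∂μ‖ ^ 2 ∂μ = ∑ k, Var[fun ω => g ω k; μ] := by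
  rw [integral_norm_sq_sub_eq_sum hg]
  refine Finset.sum_congr rfl fun k _ => ?_
  rw [variance_eq_integral (hg.eval_piLp k).aestronglyMeasurable.aemeasurable,
    eval_integral_piLp fun i => (hg.eval_piLp i).integrable one_le_two]

lemma integral_norm_sq_sub_integral_le [IsProbabilityMeasure μ] (hg : MemLp g 2 μ)
    (c : EuclideanSpace ℝ ι) :
    ∫ ω, ‖g ω - ∫ ω', g ω' ∂μ‖ ^ 2 ∂μ ≤ ∫ ω, ‖g ω - c‖ ^ 2 ∂μ := by
  rw [integral_norm_sq_sub_integral_eq_sum_variance hg, integral_norm_sq_sub_eq_sum hg]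
  refine Finset.sum_le_sum fun k _ => ?_
  have hgk := (hg.eval_piLp k).aestronglyMeasurable
  rw [← variance_sub_const hgk (c k)]
  exact variance_le_expectation_sq (hgk.sub aestronglyMeasurable_const)

end Coordinates

lemma LipschitzWith.memLp_of_memLp_id {E F : Type*} [NormedAddCommGroup E]
    [NormedAddCommGroup F] [MeasurableSpace E] {μ : Measure E} [IsFiniteMeasure μ]
    {p : ENNReal} {K : NNReal} {g : E → F} (hg : LipschitzWith K g)
    (hμ : MemLp id p μ) (hgm : AEStronglyMeasurable g μ) : MemLp g p μ := by
  refine ((memLp_const ‖g 0‖).add (hμ.norm.const_mul K)).of_le hgm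
    (Filter.Eventually.of_forall fun z => ?_)
  have hz : ‖g z‖ ≤ ‖g 0‖ + K * ‖z‖ := calc
    ‖g z‖ ≤ ‖g 0‖ + ‖g z - g 0‖ := norm_le_insert' _ _
    _ ≤ ‖g 0‖ + K * ‖z‖ := by simpa using hg.norm_sub_le z 0
  simpa [abs_of_nonneg (by positivity : 0 ≤ ‖g 0‖ + K * ‖z‖)] using hz

lemma LipschitzWith.integral_norm_sq_sub_integral_le {ι E : Type*} [Fintype ι]
    [NormedAddCommGroup E] [MeasurableSpace E] [OpensMeasurableSpace E]
    {μ : Measure E} [IsProbabilityMeasure μ] {K : NNReal} {g : E → EuclideanSpace ℝ ι}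
    (hg : LipschitzWith K g) (hμ : MemLp id 2 μ) (c : E) :
    ∫ z, ‖g z - ∫ z', g z' ∂μ‖ ^ 2 ∂μ ≤ K ^ 2 * ∫ z, ‖z - c‖ ^ 2 ∂μ := by
  have hg2 : MemLp g 2 μ := hg.memLp_of_memLp_id hμ hg.continuous.aestronglyMeasurable
  calc ∫ z, ‖g z - ∫ z', g z' ∂μ‖ ^ 2 ∂μ
      ≤ ∫ z, ‖g z - g c‖ ^ 2 ∂μ := _root_.integral_norm_sq_sub_integral_le hg2 (g c)
    _ ≤ ∫ z, K ^ 2 * ‖z - c‖ ^ 2 ∂μ := by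
      refine integral_mono (hg2.sub (memLp_const _)).norm.integrable_sq
        ((hμ.sub (memLp_const c)).norm.integrable_sq.const_mul _) fun z => ?_
      rw [← mul_pow]
      exact pow_le_pow_left₀ (norm_nonneg _) (hg.norm_sub_le z c) 2
    _ = K ^ 2 * ∫ z, ‖z - c‖ ^ 2 ∂μ := integral_const_mul _ _

section BatchMean

variable {E : Type*} {K : ℕ}

noncomputable def batchMean {F : Type*} [AddCommMonoid F] [Module ℝ F] (g : E → F)
    (w : Fin K → E) : F :=
  (K : ℝ)⁻¹ • ∑ i, g (w i)

lemma batchMean_apply {ι : Type*} [Fintype ι] (g : E → EuclideanSpace ℝ ι) (w : Fin K → E)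
    (k : ι) : batchMean g w k = batchMean (fun z => g z k) w := by
  simp [batchMean, WithLp.ofLp_sum]

variable [MeasurableSpace E] {p : Measure E} [IsProbabilityMeasure p]

lemma memLp_batchMean {F : Type*} [NormedAddCommGroup F] [NormedSpace ℝ F] {q : ENNReal}
    {g : E → F} (hg : MemLp g q p) : MemLp (batchMean g) q (Measure.pi fun _ : Fin K => p) := by
  have := memLp_finsetSum' Finset.univ fun i _ =>
    hg.comp_measurePreserving (measurePreserving_eval (fun _ : Fin K => p) i)
  convert this.const_smul (K : ℝ)⁻¹ using 1
  ext w
  simp [batchMean]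

lemma integral_batchMean {F : Type*} [NormedAddCommGroup F] [NormedSpace ℝ F] {g : E → F}
    (hg : Integrable g p) (hK : K ≠ 0) :
    ∫ w, batchMean g w ∂(Measure.pi fun _ : Fin K => p) = ∫ z, g z ∂p := by
  simp only [batchMean]
  rw [integral_smul, integral_finsetSum _ fun i _ => integrable_comp_eval hg]
  have hcoord : ∀ i : Fin K, ∫ w, g (w i) ∂(Measure.pi fun _ => p) = ∫ z, g z ∂p :=
    fun i => integral_comp_eval hg.aestronglyMeasurable
  simp_rw [hcoord]
  rw [Finset.sum_const, Finset.card_univ, Fintype.card_fin, ← Nat.cast_smul_eq_nsmul ℝ,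
    smul_smul, inv_mul_cancel₀ (Nat.cast_ne_zero.mpr hK), one_smul]

lemma variance_batchMean {h : E → ℝ} (hh : MemLp h 2 p) :
    Var[batchMean h; Measure.pi fun _ : Fin K => p] = Var[h; p] / K := by
  have hsum : batchMean h = fun w : Fin K → E => (K : ℝ)⁻¹ * (∑ i, fun w => h (w i)) w := by
    ext w; simp [batchMean]
  rw [hsum, variance_const_mul, variance_sum_pi fun _ => hh]
  rcases eq_or_ne K 0 with rfl | hK
  · simp
  · rw [Finset.sum_const, Finset.card_univ, Fintype.card_fin, nsmul_eq_mul]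
    field_simp

lemma integral_norm_sq_batchMean_sub_integral {ι : Type*} [Fintype ι]
    {g : E → EuclideanSpace ℝ ι} (hg : MemLp g 2 p) (hK : K ≠ 0) :
    ∫ w, ‖batchMean g w - ∫ z, g z ∂p‖ ^ 2 ∂(Measure.pi fun _ : Fin K => p)
      = (∫ z, ‖g z - ∫ z', g z' ∂p‖ ^ 2 ∂p) / K := by
  have hmean := integral_batchMean (hg.integrable one_le_two) hK
  calc ∫ w, ‖batchMean g w - ∫ z, g z ∂p‖ ^ 2 ∂(Measure.pi fun _ : Fin K => p)
      = ∫ w, ‖batchMean g w - ∫ w', batchMean g w' ∂(Measure.pi fun _ => p)‖ ^ 2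
          ∂(Measure.pi fun _ : Fin K => p) := by rw [hmean]
    _ = ∑ k, Var[fun w => batchMean g w k; Measure.pi fun _ : Fin K => p] :=
      integral_norm_sq_sub_integral_eq_sum_variance (memLp_batchMean hg)
    _ = ∑ k, Var[fun z => g z k; p] / K := by
      simp_rw [batchMean_apply]
      exact Finset.sum_congr rfl fun k _ => variance_batchMean (hg.eval_piLp k)
    _ = (∫ z, ‖g z - ∫ z', g z' ∂p‖ ^ 2 ∂p) / K := by
      rw [integral_norm_sq_sub_integral_eq_sum_variance hg, Finset.sum_div]

end BatchMean

theorem gradient_variance_bound_general {X : Type*} {m d : ℕ}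
    (p : Measure (EuclideanSpace ℝ (Fin m))) [IsProbabilityMeasure p]
    (f : X → EuclideanSpace ℝ (Fin m) → EuclideanSpace ℝ (Fin d))
    (Lz : ℝ)
    (hLip : ∀ x z₁ z₂, ‖f x z₁ - f x z₂‖ ≤ Lz * ‖z₁ - z₂‖)
    (zbar : EuclideanSpace ℝ (Fin m))
    (hmom : MemLp id 2 p) :
    (∀ x, ∫ z, ‖f x z - ∫ z', f x z' ∂p‖ ^ 2 ∂p
        ≤ 4 * Lz ^ 2 * ∫ z, ‖z - zbar‖ ^ 2 ∂p)
    ∧ ∀ K : ℕ, 0 < K → ∀ x,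
        ∫ w : Fin K → EuclideanSpace ℝ (Fin m),
            ‖(K : ℝ)⁻¹ • (∑ i, f x (w i)) - ∫ z', f x z' ∂p‖ ^ 2
          ∂(Measure.pi fun _ => p)
        ≤ 4 * Lz ^ 2 * (∫ z, ‖z - zbar‖ ^ 2 ∂p) / K := by
  have hL : ∀ x, LipschitzWith Lz.toNNReal (f x) := fun x =>
    LipschitzWith.of_dist_le' fun a b => by simpa only [dist_eq_norm] using hLip x a b
  have hLz : (Lz.toNNReal : ℝ) ^ 2 ≤ 4 * Lz ^ 2 := by
    rw [Real.coe_toNNReal', ← sq_abs Lz]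
    have := pow_le_pow_left₀ (le_max_right Lz 0) (max_le (le_abs_self Lz) (abs_nonneg Lz)) 2
    nlinarith [sq_nonneg |Lz|]
  have hvar : ∀ x, ∫ z, ‖f x z - ∫ z', f x z' ∂p‖ ^ 2 ∂p
      ≤ 4 * Lz ^ 2 * ∫ z, ‖z - zbar‖ ^ 2 ∂p := fun x =>
    ((hL x).integral_norm_sq_sub_integral_le hmom zbar).trans <|
      mul_le_mul_of_nonneg_right hLz (integral_nonneg fun _ => sq_nonneg _)
  refine ⟨hvar, fun K hK x => ?_⟩
  have hf2 := (hL x).memLp_of_memLp_id hmom (hL x).continuous.aestronglyMeasurable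
  exact (integral_norm_sq_batchMean_sub_integral hf2 hK.ne').trans_le
    (div_le_div_of_nonneg_right (hvar x) K.cast_nonneg)

/-- If `z ↦ ∇f(x;z)` is `L_z`-Lipschitz in the data `z` and the data distribution has a
finite second moment, then the per-sample gradient variance is bounded by
`4 L_z² Tr Var(z)`, uniformly in `x`; consequently the batch gradient of a batch of `K`
i.i.d. samples has variance at most `4 L_z² Tr Var(z) / K`. -/
theorem gradient_variance_bound {X : Type*} {m d : ℕ}
    (p : Measure (EuclideanSpace ℝ (Fin m))) [IsProbabilityMeasure p]
    (f : X → EuclideanSpace ℝ (Fin m) → EuclideanSpace ℝ (Fin d))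
    (Lz : ℝ)
    (hLip : ∀ x z₁ z₂, ‖f x z₁ - f x z₂‖ ≤ Lz * ‖z₁ - z₂‖)
    (hmeas : ∀ x, AEStronglyMeasurable (f x) p)
    (zbar : EuclideanSpace ℝ (Fin m)) (hzbar : ∫ z, z ∂p = zbar)
    (hmom : MemLp id 2 p) :
    (∀ x, ∫ z, ‖f x z - ∫ z', f x z' ∂p‖ ^ 2 ∂p
        ≤ 4 * Lz ^ 2 * ∫ z, ‖z - zbar‖ ^ 2 ∂p)
    ∧ ∀ K : ℕ, 0 < K → ∀ x,
        ∫ w : Fin K → EuclideanSpace ℝ (Fin m),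
            ‖(K : ℝ)⁻¹ • (∑ i, f x (w i)) - ∫ z', f x z' ∂p‖ ^ 2
          ∂(Measure.pi fun _ => p)
        ≤ 4 * Lz ^ 2 * (∫ z, ‖z - zbar‖ ^ 2 ∂p) / K :=
  gradient_variance_bound_general p f Lz hLip zbar hmom
end

section
/- Suppose ℓ has L-Lipschitz gradient and satisfies the PL inequality with constant μ. Suppose at each iteration t, the batch gradient satisfies E||∇ℓ_B(x_t) - ∇ℓ(x_t)||² ≤ (θ²/(1-θ)²) E||∇ℓ(x_t)||² for θ ∈ (0,1). Let β = (θ² + (1-θ)²)/(1-θ)². Then for updates x_{t+1} = x_t - α∇ℓ_B(x_t) with 0 ≤ α < 2/(Lβ), one has E[ℓ(x_{t+1}) - ℓ(x*)] ≤ (1 - 2μ(α - Lα²β/2)) E[ℓ(x_t) - ℓ(x*)], and with α = 1/(βL), E[ℓ(x_{t+1}) - ℓ(x*)] ≤ (1 - μ/(βL)) E[ℓ(x_t) - ℓ(x*)]. -/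
open MeasureTheory
open scoped RealInnerProductSpace

theorem aux_step_nonneg (L β α : ℝ) (hα0 : 0 ≤ α) (hLβ : 0 < L * β)
    (hα : α < 2 / (L * β)) : 0 ≤ α - L * α ^ 2 * β / 2 := by
  have h2 : α * (L * β) < 2 := (lt_div_iff₀ hLβ).mp hα
  nlinarith [mul_nonneg hα0 (by linarith : (0:ℝ) ≤ 2 - α * (L * β))]

theorem aux_final (c G mu k : ℝ) (hk : 0 ≤ k) (hPL : 2 * mu * c ≤ G) :
    c - k * G ≤ (1 - 2 * mu * k) * c := by
  nlinarith [mul_le_mul_of_nonneg_left hPL hk]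

/-- Linear convergence of big batch SGD (one step, conditioned on the current iterate
`xt`): under `L`-smoothness, the PL inequality, and the big batch noise condition
`E‖e‖² ≤ (θ²/(1-θ)²)‖∇ℓ(x_t)‖²`, the update `x_{t+1} = x_t - α ∇ℓ_B(x_t)` with
`0 ≤ α < 2/(Lβ)` contracts the expected optimality gap by
`γ = 1 - 2μ(α - Lα²β/2)`; choosing `α = 1/(βL)` gives factor `1 - μ/(βL)`. -/
theorem big_batch_linear_convergence {d : ℕ} {Ω : Type*} [MeasurableSpace Ω]
    (P : Measure Ω) [IsProbabilityMeasure P]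
    (ℓ : EuclideanSpace ℝ (Fin d) → ℝ) (g : EuclideanSpace ℝ (Fin d) → EuclideanSpace ℝ (Fin d))
    (L mu : ℝ) (hL : 0 < L) (hmu : 0 < mu)
    (hsmooth : ∀ x y, ℓ x ≤ ℓ y + ⟪g y, x - y⟫ + L / 2 * ‖x - y‖ ^ 2)
    (xstar : EuclideanSpace ℝ (Fin d)) (hmin : ∀ x, ℓ xstar ≤ ℓ x)
    (hPL : ∀ x, 2 * mu * (ℓ x - ℓ xstar) ≤ ‖g x‖ ^ 2)
    (θ : ℝ) (hθ : θ ∈ Set.Ioo (0 : ℝ) 1)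
    (β : ℝ) (hβ : β = (θ ^ 2 + (1 - θ) ^ 2) / (1 - θ) ^ 2)
    (xt : EuclideanSpace ℝ (Fin d))
    (e : Ω → EuclideanSpace ℝ (Fin d))
    (he : Integrable e P) (hemean : ∫ ω, e ω ∂P = 0)
    (he2 : Integrable (fun ω => ‖e ω‖ ^ 2) P)
    (hnoise : ∫ ω, ‖e ω‖ ^ 2 ∂P ≤ θ ^ 2 / (1 - θ) ^ 2 * ‖g xt‖ ^ 2)
    (α : ℝ) (hα0 : 0 ≤ α) (hα : α < 2 / (L * β))
    (hint : Integrable (fun ω => ℓ (xt - α • (g xt + e ω))) P) :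
    (∫ ω, (ℓ (xt - α • (g xt + e ω)) - ℓ xstar) ∂P
        ≤ (1 - 2 * mu * (α - L * α ^ 2 * β / 2)) * (ℓ xt - ℓ xstar))
    ∧ (α = 1 / (β * L) →
        ∫ ω, (ℓ (xt - α • (g xt + e ω)) - ℓ xstar) ∂P
          ≤ (1 - mu / (β * L)) * (ℓ xt - ℓ xstar)) := by
  obtain ⟨hθ0, hθ1⟩ := hθ
  have h1θ : (0:ℝ) < (1 - θ) ^ 2 := pow_pos (by linarith) 2
  have hβ1 : β = 1 + θ ^ 2 / (1 - θ) ^ 2 := by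
    rw [hβ]; field_simp; ring
  have hβpos : (0:ℝ) < β := by
    have h2 : (0:ℝ) < θ ^ 2 / (1 - θ) ^ 2 := div_pos (pow_pos hθ0 2) h1θ
    rw [hβ1]; linarith
  set gx := g xt with hgx
  set G := ‖g xt‖ ^ 2 with hG
  set c := ℓ xt - ℓ xstar with hc
  have hG0 : 0 ≤ G := by positivity
  have hc0 : 0 ≤ c := by
    have := hmin xt; simp [hc]; linarith
  -- the affine upper bound function
  set A : ℝ := c - α * G + L / 2 * α ^ 2 * G with hA
  set B : ℝ := -α + L * α ^ 2 with hB
  set C : ℝ := L / 2 * α ^ 2 with hC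
  set f : Ω → ℝ := fun ω => A + B * ⟪gx, e ω⟫ + C * ‖e ω‖ ^ 2 with hf
  have hfint : Integrable f P := by
    apply Integrable.add
    · exact (integrable_const A).add ((he.const_inner gx).const_mul B)
    · exact he2.const_mul C
  have hpt : ∀ ω, ℓ (xt - α • (gx + e ω)) - ℓ xstar ≤ f ω := by
    intro ω
    have hs := hsmooth (xt - α • (gx + e ω)) xt
    have hxy : xt - α • (gx + e ω) - xt = -(α • (gx + e ω)) := by abel
    rw [hxy] at hs
    have hinner : ⟪gx, -(α • (gx + e ω))⟫ = -(α * (⟪gx, gx⟫ + ⟪gx, e ω⟫)) := by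
      rw [inner_neg_right, real_inner_smul_right, inner_add_right]
    have hnorm : ‖-(α • (gx + e ω))‖ ^ 2 = α ^ 2 * (‖gx‖ ^ 2 + 2 * ⟪gx, e ω⟫ + ‖e ω‖ ^ 2) := by
      rw [norm_neg, norm_smul, mul_pow, ← @norm_add_sq_real]
      simp [sq_abs]
    have hgg : ⟪gx, gx⟫ = G := real_inner_self_eq_norm_sq gx
    rw [hinner, hnorm, hgg] at hs
    simp only [hf, hA, hB, hC, hc, hG]
    nlinarith [hs]
  have hIf : ∫ ω, f ω ∂P = A + C * ∫ ω, ‖e ω‖ ^ 2 ∂P := by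
    have hi1 : Integrable (fun ω => A + B * ⟪gx, e ω⟫) P :=
      (integrable_const A).add ((he.const_inner gx).const_mul B)
    have step1 : ∫ ω, f ω ∂P
        = (∫ ω, (A + B * ⟪gx, e ω⟫) ∂P) + ∫ ω, C * ‖e ω‖ ^ 2 ∂P :=
      integral_add hi1 (he2.const_mul C)
    have step2 : ∫ ω, (A + B * ⟪gx, e ω⟫) ∂P
        = (∫ _ω, A ∂P) + ∫ ω, B * ⟪gx, e ω⟫ ∂P :=
      integral_add (integrable_const A) ((he.const_inner gx).const_mul B)
    have step3 : ∫ ω, ⟪gx, e ω⟫ ∂P = ⟪gx, ∫ ω, e ω ∂P⟫ := integral_inner he gx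
    rw [step1, step2, integral_const_mul, integral_const_mul, step3, hemean,
      inner_zero_right]
    simp
  have hC0 : 0 ≤ C := by rw [hC]; positivity
  have hIe : C * ∫ ω, ‖e ω‖ ^ 2 ∂P ≤ C * (θ ^ 2 / (1 - θ) ^ 2 * G) :=
    mul_le_mul_of_nonneg_left hnoise hC0
  have hmain : ∫ ω, (ℓ (xt - α • (gx + e ω)) - ℓ xstar) ∂P
      ≤ (1 - 2 * mu * (α - L * α ^ 2 * β / 2)) * c := by
    have h1 : ∫ ω, (ℓ (xt - α • (gx + e ω)) - ℓ xstar) ∂P ≤ ∫ ω, f ω ∂P := by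
      apply integral_mono (hint.sub (integrable_const (ℓ xstar))) hfint hpt
    have h2 : A + C * (θ ^ 2 / (1 - θ) ^ 2 * G) = c - (α - L * α ^ 2 * β / 2) * G := by
      rw [hA, hC, hβ1]; ring
    have hk : 0 ≤ α - L * α ^ 2 * β / 2 :=
      aux_step_nonneg L β α hα0 (mul_pos hL hβpos) hα
    have hPLt : 2 * mu * c ≤ G := by rw [hc, hG]; exact hPL xt
    calc ∫ ω, (ℓ (xt - α • (gx + e ω)) - ℓ xstar) ∂P
        ≤ A + C * ∫ ω, ‖e ω‖ ^ 2 ∂P := by rw [← hIf]; exact h1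
      _ ≤ c - (α - L * α ^ 2 * β / 2) * G := by rw [← h2]; linarith
      _ ≤ (1 - 2 * mu * (α - L * α ^ 2 * β / 2)) * c :=
          aux_final c G mu _ hk hPLt
  refine ⟨hmain, fun hαeq => ?_⟩
  have : (1 - 2 * mu * (α - L * α ^ 2 * β / 2)) = 1 - mu / (β * L) := by
    rw [hαeq]; field_simp; ring
  rw [← this]; exact hmain
end

section
/- Let ℓ be convex with L-Lipschitz gradient, and suppose at each iteration the batch gradient noise e_t = ∇ℓ_B(x_t) - ∇ℓ(x_t) satisfies E[e_t | x_t] = 0 and E||e_t||² ≤ (θ²/(1-θ)²)||∇ℓ(x_t)||². Let β = (θ²+(1-θ)²)/(1-θ)². Then for updates x_{t+1} = x_t - α∇ℓ_B(x_t) with α < 1/(Lβ), E[ℓ(x_T) - ℓ(x*)] ≤ ||x_0 - x*||²/((2α - 2Lα²β)(T+1)), and with α = 1/(2Lβ), E[ℓ(x_T) - ℓ(x*)] ≤ 2Lβ||x_0 - x*||²/(T+1). -/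
/-!
Write `D_t = E‖x_t - x*‖²` and `δ_t = E[ℓ(x_t) - ℓ(x*)]`. Since `E[e_t | x_t] = 0`, the noise is
orthogonal in `L²` to every square-integrable function of `x_t`, so the cross terms of a step
vanish in expectation. Expanding the square, convexity, the bound `‖∇ℓ‖² ≤ 2L(ℓ - ℓ(x*))` and the
noise bound `E‖e_t‖² ≤ (β - 1) E‖∇ℓ(x_t)‖²` give `D_{t+1} ≤ D_t - (2α - 2Lα²β) δ_t`, and the
descent lemma gives `δ_{t+1} ≤ δ_t`. Summing the first inequality over `t ≤ T` and bounding every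
`δ_t` below by `δ_T` yields the rate.
-/

open MeasureTheory
open scoped RealInnerProductSpace

section Smooth

variable {E : Type*} [NormedAddCommGroup E] [InnerProductSpace ℝ E] {f : E → ℝ} {g : E → E}
  {L : ℝ}

theorem norm_sq_le_of_smooth_of_le (hL : 0 < L)
    (hsmooth : ∀ x y, f x ≤ f y + ⟪g y, x - y⟫ + L / 2 * ‖x - y‖ ^ 2) {m : ℝ}
    (hm : ∀ x, m ≤ f x) (y : E) : ‖g y‖ ^ 2 ≤ 2 * L * (f y - m) := by
  have key := (hm _).trans (hsmooth (y - L⁻¹ • g y) y)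
  rw [sub_sub_cancel_left, inner_neg_right, norm_neg, real_inner_smul_right,
    real_inner_self_eq_norm_sq, norm_smul, mul_pow, Real.norm_eq_abs, sq_abs] at key
  field_simp at key
  linarith

theorem norm_sub_sq_le_of_smooth_of_convex (hL : 0 < L)
    (hsmooth : ∀ x y, f x ≤ f y + ⟪g y, x - y⟫ + L / 2 * ‖x - y‖ ^ 2)
    (hconvex : ∀ x y, f y + ⟪g y, x - y⟫ ≤ f x) (y z : E) :
    ‖g y - g z‖ ^ 2 ≤ 2 * L * (f y - f z - ⟪g z, y - z⟫) := by
  -- `x ↦ f x - ⟪g z, x⟫` is `L`-smooth with gradient `g x - g z` and minimal at `z`.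
  have hsmooth' : ∀ x y, f x - ⟪g z, x⟫ ≤ f y - ⟪g z, y⟫ + ⟪g y - g z, x - y⟫
      + L / 2 * ‖x - y‖ ^ 2 := fun x y => by
    rw [inner_sub_left, inner_sub_right (g z) x y]
    linarith [hsmooth x y]
  have hlow : ∀ x, f z - ⟪g z, z⟫ ≤ f x - ⟪g z, x⟫ := fun x => by
    have := hconvex x z
    rw [inner_sub_right] at this
    linarith
  have := norm_sq_le_of_smooth_of_le hL hsmooth' hlow y
  rw [inner_sub_right]
  linarith

theorem lipschitzWith_of_smooth_of_convex (hL : 0 < L)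
    (hsmooth : ∀ x y, f x ≤ f y + ⟪g y, x - y⟫ + L / 2 * ‖x - y‖ ^ 2)
    (hconvex : ∀ x y, f y + ⟪g y, x - y⟫ ≤ f x) : LipschitzWith L.toNNReal g := by
  refine LipschitzWith.of_dist_le_mul fun y z => ?_
  rw [dist_eq_norm, dist_eq_norm, Real.coe_toNNReal _ hL.le]
  refine (pow_le_pow_iff_left₀ (norm_nonneg _) (by positivity) two_ne_zero).1 ?_
  calc ‖g y - g z‖ ^ 2 ≤ 2 * L * (f y - f z - ⟪g z, y - z⟫) :=
        norm_sub_sq_le_of_smooth_of_convex hL hsmooth hconvex y z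
    _ ≤ 2 * L * (L / 2 * ‖y - z‖ ^ 2) := by gcongr; linarith [hsmooth y z]
    _ = (L * ‖y - z‖) ^ 2 := by ring

end Smooth

namespace MeasureTheory

variable {Ω E : Type*} {m m0 : MeasurableSpace Ω} {μ : Measure Ω}
  [NormedAddCommGroup E]

theorem MemLp.integrable_norm_sq {f : Ω → E} (hf : MemLp f 2 μ) :
    Integrable (fun ω => ‖f ω‖ ^ 2) μ :=
  (memLp_two_iff_integrable_sq_norm hf.1).1 hf

variable [InnerProductSpace ℝ E]

theorem MemLp.integrable_inner {f h : Ω → E} (hf : MemLp f 2 μ) (hh : MemLp h 2 μ) :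
    Integrable (fun ω => ⟪f ω, h ω⟫) μ :=
  memLp_one_iff_integrable.1 ((innerSL ℝ).memLp_of_bilin 1 hf hh)

theorem integral_inner_eq_zero_of_condExp_eq_zero [CompleteSpace E] [IsFiniteMeasure μ]
    (hm : m ≤ m0) {f e : Ω → E} (hf : AEStronglyMeasurable[m] f μ)
    (hfe : Integrable (fun ω => ⟪f ω, e ω⟫) μ) (he : Integrable e μ) (hcond : μ[e | m] =ᵐ[μ] 0) :
    ∫ ω, ⟪f ω, e ω⟫ ∂μ = 0 := by
  have hpull : μ[fun ω => ⟪f ω, e ω⟫ | m] =ᵐ[μ] fun ω => ⟪f ω, μ[e | m] ω⟫ :=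
    condExp_bilin_of_aestronglyMeasurable_left (innerSL ℝ) hf hfe he
  rw [← integral_condExp hm]
  refine integral_eq_zero_of_ae ?_
  filter_upwards [hpull, hcond] with ω hω hzero
  simpa [hzero] using hω

end MeasureTheory

section SGDStep

variable {Ω E : Type*} [MeasurableSpace Ω] {P : Measure Ω} [IsFiniteMeasure P]
  [NormedAddCommGroup E] [InnerProductSpace ℝ E] [CompleteSpace E] [MeasurableSpace E]
  [BorelSpace E] [SecondCountableTopology E] {g : E → E} {X e : Ω → E}

theorem integral_inner_comp_eq_zero_of_condExp_comap_eq_zero (hX : Measurable X)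
    (he : MemLp e 2 P) (hcond : P[e | MeasurableSpace.comap X inferInstance] =ᵐ[P] 0)
    {φ : E → E} (hφ : Measurable φ) (hφX : MemLp (fun ω => φ (X ω)) 2 P) :
    ∫ ω, ⟪φ (X ω), e ω⟫ ∂P = 0 :=
  integral_inner_eq_zero_of_condExp_eq_zero hX.comap_le
    (hφ.comp (comap_measurable X)).aestronglyMeasurable (hφX.integrable_inner he)
    (he.integrable one_le_two) hcond

theorem integral_norm_sub_sq_sgd_step (hg : Measurable g) (hX : Measurable X)
    (hX2 : MemLp X 2 P) (hgX : MemLp (fun ω => g (X ω)) 2 P) (he : MemLp e 2 P)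
    (hcond : P[e | MeasurableSpace.comap X inferInstance] =ᵐ[P] 0) (α : ℝ) (z : E) :
    ∫ ω, ‖X ω - α • (g (X ω) + e ω) - z‖ ^ 2 ∂P
      = ∫ ω, ‖X ω - z‖ ^ 2 ∂P - 2 * α * ∫ ω, ⟪X ω - z, g (X ω)⟫ ∂P
        + α ^ 2 * (∫ ω, ‖g (X ω)‖ ^ 2 ∂P + ∫ ω, ‖e ω‖ ^ 2 ∂P) := by
  have hXz : MemLp (fun ω => X ω - z) 2 P := hX2.sub (memLp_const z)
  have h1 := hXz.integrable_norm_sq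
  have h2 := hXz.integrable_inner hgX
  have h3 := hXz.integrable_inner he
  have h4 := hgX.integrable_norm_sq
  have h5 := hgX.integrable_inner he
  have h6 := he.integrable_norm_sq
  have hexpand : ∀ ω, ‖X ω - α • (g (X ω) + e ω) - z‖ ^ 2
      = ‖X ω - z‖ ^ 2 - 2 * α * ⟪X ω - z, g (X ω)⟫ - 2 * α * ⟪X ω - z, e ω⟫
        + α ^ 2 * ‖g (X ω)‖ ^ 2 + 2 * α ^ 2 * ⟪g (X ω), e ω⟫ + α ^ 2 * ‖e ω‖ ^ 2 := by
    intro ω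
    rw [sub_right_comm, norm_sub_sq_real, norm_smul, mul_pow, Real.norm_eq_abs, sq_abs,
      norm_add_sq_real, real_inner_smul_right, inner_add_right]
    ring
  simp_rw [hexpand]
  simp (disch := fun_prop) only [integral_add, integral_sub, integral_const_mul]
  rw [integral_inner_comp_eq_zero_of_condExp_comap_eq_zero hX he hcond
      (φ := fun x => x - z) (measurable_id.sub_const z) hXz,
    integral_inner_comp_eq_zero_of_condExp_comap_eq_zero hX he hcond hg hgX]
  ring

theorem integral_sgd_step_le {ℓ : E → ℝ} {L : ℝ}
    (hsmooth : ∀ x y, ℓ x ≤ ℓ y + ⟪g y, x - y⟫ + L / 2 * ‖x - y‖ ^ 2) (hg : Measurable g)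
    (hX : Measurable X) (hgX : MemLp (fun ω => g (X ω)) 2 P) (he : MemLp e 2 P)
    (hcond : P[e | MeasurableSpace.comap X inferInstance] =ᵐ[P] 0) (α : ℝ)
    (hℓX : Integrable (fun ω => ℓ (X ω)) P)
    (hℓX' : Integrable (fun ω => ℓ (X ω - α • (g (X ω) + e ω))) P) :
    ∫ ω, ℓ (X ω - α • (g (X ω) + e ω)) ∂P
      ≤ ∫ ω, ℓ (X ω) ∂P - (α - L / 2 * α ^ 2) * ∫ ω, ‖g (X ω)‖ ^ 2 ∂P
        + L / 2 * α ^ 2 * ∫ ω, ‖e ω‖ ^ 2 ∂P := by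
  have h1 := hgX.integrable_norm_sq
  have h2 := hgX.integrable_inner he
  have h3 := he.integrable_norm_sq
  have hpoint : ∀ ω, ℓ (X ω - α • (g (X ω) + e ω)) - ℓ (X ω)
      ≤ -(α - L / 2 * α ^ 2) * ‖g (X ω)‖ ^ 2 + (L * α ^ 2 - α) * ⟪g (X ω), e ω⟫
        + L / 2 * α ^ 2 * ‖e ω‖ ^ 2 := by
    intro ω
    have h := hsmooth (X ω - α • (g (X ω) + e ω)) (X ω)
    rw [sub_sub_cancel_left, inner_neg_right, norm_neg, norm_smul, mul_pow, Real.norm_eq_abs,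
      sq_abs, norm_add_sq_real, real_inner_smul_right, inner_add_right,
      real_inner_self_eq_norm_sq] at h
    linarith
  have key : ∫ ω, ℓ (X ω - α • (g (X ω) + e ω)) ∂P - ∫ ω, ℓ (X ω) ∂P
      ≤ ∫ ω, (-(α - L / 2 * α ^ 2) * ‖g (X ω)‖ ^ 2 + (L * α ^ 2 - α) * ⟪g (X ω), e ω⟫
        + L / 2 * α ^ 2 * ‖e ω‖ ^ 2) ∂P := by
    rw [← integral_sub hℓX' hℓX]
    exact integral_mono (hℓX'.sub hℓX) (by fun_prop) hpoint
  simp (disch := fun_prop) only [integral_add, integral_const_mul] at key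
  rw [integral_inner_comp_eq_zero_of_condExp_comap_eq_zero hX he hcond hg hgX] at key
  linarith

variable {ℓ : E → ℝ} {L α β : ℝ} {xstar : E}

theorem integral_norm_sub_sq_sgd_step_le (hL : 0 < L)
    (hsmooth : ∀ x y, ℓ x ≤ ℓ y + ⟪g y, x - y⟫ + L / 2 * ‖x - y‖ ^ 2)
    (hconvex : ∀ x y, ℓ y + ⟪g y, x - y⟫ ≤ ℓ x) (hmin : ∀ x, ℓ xstar ≤ ℓ x)
    (hα : 0 ≤ α) (hβ : 0 ≤ β) (hX : Measurable X) (hX2 : MemLp X 2 P)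
    (hgX : MemLp (fun ω => g (X ω)) 2 P) (he : MemLp e 2 P)
    (hcond : P[e | MeasurableSpace.comap X inferInstance] =ᵐ[P] 0)
    (hnoise : ∫ ω, ‖e ω‖ ^ 2 ∂P ≤ (β - 1) * ∫ ω, ‖g (X ω)‖ ^ 2 ∂P)
    (hℓX : Integrable (fun ω => ℓ (X ω)) P) :
    ∫ ω, ‖X ω - α • (g (X ω) + e ω) - xstar‖ ^ 2 ∂P
      ≤ ∫ ω, ‖X ω - xstar‖ ^ 2 ∂P
        - (2 * α - 2 * L * α ^ 2 * β) * ∫ ω, (ℓ (X ω) - ℓ xstar) ∂P := by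
  have hg := (lipschitzWith_of_smooth_of_convex hL hsmooth hconvex).continuous.measurable
  have hgap : Integrable (fun ω => ℓ (X ω) - ℓ xstar) P := hℓX.sub (integrable_const _)
  have hgrad : ∫ ω, ‖g (X ω)‖ ^ 2 ∂P ≤ 2 * L * ∫ ω, (ℓ (X ω) - ℓ xstar) ∂P := by
    rw [← integral_const_mul]
    exact integral_mono hgX.integrable_norm_sq (hgap.const_mul _)
      fun ω => norm_sq_le_of_smooth_of_le hL hsmooth hmin (X ω)
  have hcorr : ∫ ω, (ℓ (X ω) - ℓ xstar) ∂P ≤ ∫ ω, ⟪X ω - xstar, g (X ω)⟫ ∂P := by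
    refine integral_mono hgap ((hX2.sub (memLp_const xstar)).integrable_inner hgX) fun ω => ?_
    have := hconvex xstar (X ω)
    rw [← neg_sub, inner_neg_right, real_inner_comm] at this
    linarith
  rw [integral_norm_sub_sq_sgd_step hg hX hX2 hgX he hcond α xstar]
  have hG : 0 ≤ ∫ ω, ‖g (X ω)‖ ^ 2 ∂P := integral_nonneg fun ω => sq_nonneg _
  nlinarith [mul_le_mul_of_nonneg_left hcorr hα, mul_le_mul_of_nonneg_left hgrad
    (mul_nonneg (sq_nonneg α) hβ)]

theorem integral_sgd_step_sub_le (hL : 0 < L)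
    (hsmooth : ∀ x y, ℓ x ≤ ℓ y + ⟪g y, x - y⟫ + L / 2 * ‖x - y‖ ^ 2)
    (hconvex : ∀ x y, ℓ y + ⟪g y, x - y⟫ ≤ ℓ x) (hα : 0 ≤ α) (hαLβ : α * L * β ≤ 2)
    (hX : Measurable X) (hgX : MemLp (fun ω => g (X ω)) 2 P) (he : MemLp e 2 P)
    (hcond : P[e | MeasurableSpace.comap X inferInstance] =ᵐ[P] 0)
    (hnoise : ∫ ω, ‖e ω‖ ^ 2 ∂P ≤ (β - 1) * ∫ ω, ‖g (X ω)‖ ^ 2 ∂P)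
    (hℓX : Integrable (fun ω => ℓ (X ω)) P)
    (hℓX' : Integrable (fun ω => ℓ (X ω - α • (g (X ω) + e ω))) P) (c : ℝ) :
    ∫ ω, (ℓ (X ω - α • (g (X ω) + e ω)) - c) ∂P ≤ ∫ ω, (ℓ (X ω) - c) ∂P := by
  have hg := (lipschitzWith_of_smooth_of_convex hL hsmooth hconvex).continuous.measurable
  rw [integral_sub hℓX' (integrable_const c), integral_sub hℓX (integrable_const c),
    sub_le_sub_iff_right]
  refine (integral_sgd_step_le hsmooth hg hX hgX he hcond α hℓX hℓX').trans ?_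
  have hG : 0 ≤ ∫ ω, ‖g (X ω)‖ ^ 2 ∂P := integral_nonneg fun ω => sq_nonneg _
  nlinarith [mul_le_mul_of_nonneg_left hnoise (by positivity : 0 ≤ L / 2 * α ^ 2),
    mul_le_mul_of_nonneg_right hαLβ (mul_nonneg hα hG)]

end SGDStep

theorem le_div_of_telescoping_descent {D δ : ℕ → ℝ} {c : ℝ} (hc : 0 < c) (hD : ∀ t, 0 ≤ D t)
    (hstep : ∀ t, D (t + 1) ≤ D t - c * δ t) (hδ : Antitone δ) (T : ℕ) :
    δ T ≤ D 0 / (c * (T + 1)) := by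
  have hsum : ∀ T : ℕ, (T + 1) * (c * δ T) ≤ D 0 - D (T + 1) := by
    intro T
    induction T with
    | zero => simp only [Nat.cast_zero, zero_add, one_mul]; linarith [hstep 0]
    | succ T ih =>
      have := mul_le_mul_of_nonneg_left (hδ T.le_succ) hc.le
      push_cast
      nlinarith [hstep (T + 1), mul_le_mul_of_nonneg_left this (by positivity : (0 : ℝ) ≤ T + 1)]
  rw [le_div_iff₀ (by positivity)]
  linarith [hsum T, hD (T + 1)]

/-- Sublinear `O(1/T)` convergence of big batch SGD for convex `L`-smooth objectives:
with zero conditional-mean noise satisfying the big batch bound (in expectation) and a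
constant stepsize `α < 1/(Lβ)`,
`E[ℓ(x_T) - ℓ(x*)] ≤ ‖x_0 - x*‖² / ((2α - 2Lα²β)(T+1))`;
with `α = 1/(2Lβ)` this is `2Lβ‖x_0 - x*‖²/(T+1)`. -/
theorem big_batch_sublinear_convex {d : ℕ} {Ω : Type*} [MeasurableSpace Ω]
    (P : Measure Ω) [IsProbabilityMeasure P]
    (ℓ : EuclideanSpace ℝ (Fin d) → ℝ) (g : EuclideanSpace ℝ (Fin d) → EuclideanSpace ℝ (Fin d))
    (L : ℝ) (hL : 0 < L)
    (hsmooth : ∀ x y, ℓ x ≤ ℓ y + ⟪g y, x - y⟫ + L / 2 * ‖x - y‖ ^ 2)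
    (hconvex : ∀ x y, ℓ y + ⟪g y, x - y⟫ ≤ ℓ x)
    (xstar : EuclideanSpace ℝ (Fin d)) (hmin : ∀ x, ℓ xstar ≤ ℓ x)
    (θ : ℝ) (hθ : θ ∈ Set.Ioo (0 : ℝ) 1)
    (β : ℝ) (hβ : β = (θ ^ 2 + (1 - θ) ^ 2) / (1 - θ) ^ 2)
    (α : ℝ) (hα0 : 0 < α) (hα : α < 1 / (L * β))
    (x e : ℕ → Ω → EuclideanSpace ℝ (Fin d))
    (hxmeas : ∀ t, Measurable (x t))
    (hx2 : ∀ t, MemLp (x t) 2 P) (he2 : ∀ t, MemLp (e t) 2 P)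
    (hupdate : ∀ t ω, x (t + 1) ω = x t ω - α • (g (x t ω) + e t ω))
    (hnoise_mean : ∀ t, P[e t | MeasurableSpace.comap (x t) inferInstance] =ᵐ[P] 0)
    (hnoise_bound : ∀ t, ∫ ω, ‖e t ω‖ ^ 2 ∂P
        ≤ θ ^ 2 / (1 - θ) ^ 2 * ∫ ω, ‖g (x t ω)‖ ^ 2 ∂P)
    (hℓint : ∀ t, Integrable (fun ω => ℓ (x t ω)) P)
    (hg2 : ∀ t, MemLp (fun ω => g (x t ω)) 2 P)
    (x0 : EuclideanSpace ℝ (Fin d)) (hx0 : ∀ ω, x 0 ω = x0) :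
    (∀ T : ℕ, ∫ ω, (ℓ (x T ω) - ℓ xstar) ∂P
        ≤ ‖x0 - xstar‖ ^ 2 / ((2 * α - 2 * L * α ^ 2 * β) * (T + 1)))
    ∧ (α = 1 / (2 * L * β) →
        ∀ T : ℕ, ∫ ω, (ℓ (x T ω) - ℓ xstar) ∂P
          ≤ 2 * L * β * ‖x0 - xstar‖ ^ 2 / (T + 1)) := by
  obtain ⟨hθ0, hθ1⟩ := hθ
  have h1θ : 0 < 1 - θ := by linarith
  have hβ0 : 0 < β := by rw [hβ]; positivity
  have hnoise t : ∫ ω, ‖e t ω‖ ^ 2 ∂P ≤ (β - 1) * ∫ ω, ‖g (x t ω)‖ ^ 2 ∂P := by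
    convert hnoise_bound t using 2
    rw [hβ]; field_simp; ring
  have hαLβ : α * L * β < 1 := by
    rw [lt_div_iff₀ (by positivity)] at hα; linarith
  have hc : 0 < 2 * α - 2 * L * α ^ 2 * β := by nlinarith
  have hdist t : ∫ ω, ‖x (t + 1) ω - xstar‖ ^ 2 ∂P
      ≤ ∫ ω, ‖x t ω - xstar‖ ^ 2 ∂P
        - (2 * α - 2 * L * α ^ 2 * β) * ∫ ω, (ℓ (x t ω) - ℓ xstar) ∂P := by
    simp only [hupdate]
    exact integral_norm_sub_sq_sgd_step_le hL hsmooth hconvex hmin hα0.le hβ0.le (hxmeas t)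
      (hx2 t) (hg2 t) (he2 t) (hnoise_mean t) (hnoise t) (hℓint t)
  have hgap t : ∫ ω, (ℓ (x (t + 1) ω) - ℓ xstar) ∂P ≤ ∫ ω, (ℓ (x t ω) - ℓ xstar) ∂P := by
    simp only [hupdate]
    exact integral_sgd_step_sub_le hL hsmooth hconvex hα0.le (by linarith) (hxmeas t) (hg2 t)
      (he2 t) (hnoise_mean t) (hnoise t) (hℓint t) (by simpa only [hupdate] using hℓint (t + 1)) _
  have rate := le_div_of_telescoping_descent (D := fun t => ∫ ω, ‖x t ω - xstar‖ ^ 2 ∂P)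
    (δ := fun t => ∫ ω, (ℓ (x t ω) - ℓ xstar) ∂P) hc
    (fun t => integral_nonneg fun ω => sq_nonneg _) hdist (antitone_nat_of_succ_le hgap)
  simp only [hx0, integral_const, probReal_univ, one_smul] at rate
  refine ⟨rate, fun hα' T => (rate T).trans_eq ?_⟩
  rw [hα']
  field_simp
  ring
end

section
/- Suppose ℓ has L-Lipschitz gradient, satisfies the PL inequality with constant μ, and at each iteration the batch gradient noise satisfies E||e_t||² ≤ (θ²/(1-θ)²)E||∇ℓ(x_t)||² with β = (θ²+(1-θ)²)/(1-θ)². If the stepsize α_t satisfies 0 < α_t ≤ 1/(βL), then the Armijo condition holds in expectation: E[ℓ(x_{t+1})] ≤ E[ℓ(x_t)] - c α_t E||∇ℓ(x_t)||² for any 0 < c ≤ 1/2, where x_{t+1} = x_t - α_t ∇ℓ_B(x_t). -/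
/-!
Expanding the `L`-smooth upper bound along the step `-α (∇ℓ(x) + e)` and averaging, the cross
term `⟪∇ℓ(x), e⟫` vanishes because the noise is centred, which leaves the expected descent bound
`E ℓ(x⁺) ≤ ℓ(x) - α‖∇ℓ(x)‖² + (L α² / 2)(‖∇ℓ(x)‖² + E‖e‖²)`. The noise bound turns the bracket into
at most `β ‖∇ℓ(x)‖²`, and `α ≤ 1/(βL)` makes `-α + L α² β / 2 ≤ -α / 2 ≤ -c α`.
-/

open MeasureTheory
open scoped RealInnerProductSpace

section Noise

variable {Ω E : Type*} [MeasurableSpace Ω] {P : Measure Ω}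
  [NormedAddCommGroup E] [InnerProductSpace ℝ E] {e : Ω → E}

lemma integrable_norm_add_sq [IsFiniteMeasure P] (v : E) (he : Integrable e P)
    (he2 : Integrable (fun ω => ‖e ω‖ ^ 2) P) :
    Integrable (fun ω => ‖v + e ω‖ ^ 2) P := by
  simp_rw [norm_add_sq_real]
  exact ((integrable_const _).add ((he.const_inner v).const_mul 2)).add he2

lemma integral_norm_add_sq_of_integral_eq_zero [CompleteSpace E] [IsProbabilityMeasure P]
    (v : E) (he : Integrable e P) (hemean : ∫ ω, e ω ∂P = 0)
    (he2 : Integrable (fun ω => ‖e ω‖ ^ 2) P) :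
    ∫ ω, ‖v + e ω‖ ^ 2 ∂P = ‖v‖ ^ 2 + ∫ ω, ‖e ω‖ ^ 2 ∂P := by
  have hinner : ∫ ω, ⟪v, e ω⟫ ∂P = 0 := by rw [integral_inner he, hemean, inner_zero_right]
  have hcross : Integrable (fun ω => 2 * ⟪v, e ω⟫) P := (he.const_inner v).const_mul 2
  have hlin : Integrable (fun ω => ‖v‖ ^ 2 + 2 * ⟪v, e ω⟫) P := (integrable_const _).add hcross
  simp_rw [norm_add_sq_real]
  rw [integral_add hlin he2, integral_add (integrable_const _) hcross, integral_const,
    integral_const_mul, hinner]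
  simp

lemma integral_inner_add_of_integral_eq_zero [CompleteSpace E] [IsProbabilityMeasure P]
    (v : E) (he : Integrable e P) (hemean : ∫ ω, e ω ∂P = 0) :
    ∫ ω, ⟪v, v + e ω⟫ ∂P = ‖v‖ ^ 2 := by
  have hshift : Integrable (fun ω => v + e ω) P := (integrable_const v).add he
  rw [integral_inner hshift, integral_add (integrable_const v) he, hemean, integral_const]
  simp

end Noise

section Descent

variable {E : Type*} [NormedAddCommGroup E] [InnerProductSpace ℝ E]

lemma le_of_smooth_step {ℓ : E → ℝ} {g : E → E} {L : ℝ}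
    (hsmooth : ∀ x y, ℓ x ≤ ℓ y + ⟪g y, x - y⟫ + L / 2 * ‖x - y‖ ^ 2) (x v : E) (α : ℝ) :
    ℓ (x - α • v) ≤ ℓ x - α * ⟪g x, v⟫ + L / 2 * α ^ 2 * ‖v‖ ^ 2 := by
  have h := hsmooth (x - α • v) x
  rwa [sub_sub_cancel_left, inner_neg_right, norm_neg, inner_smul_right, norm_smul,
    Real.norm_eq_abs, mul_pow, sq_abs, ← sub_eq_add_neg, ← mul_assoc] at h

lemma integral_le_of_smooth_noisy_step [CompleteSpace E] {Ω : Type*} [MeasurableSpace Ω]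
    {P : Measure Ω} [IsProbabilityMeasure P] {ℓ : E → ℝ} {g : E → E} {L : ℝ}
    (hsmooth : ∀ x y, ℓ x ≤ ℓ y + ⟪g y, x - y⟫ + L / 2 * ‖x - y‖ ^ 2) (x : E) (α : ℝ)
    {e : Ω → E} (he : Integrable e P) (hemean : ∫ ω, e ω ∂P = 0)
    (he2 : Integrable (fun ω => ‖e ω‖ ^ 2) P)
    (hint : Integrable (fun ω => ℓ (x - α • (g x + e ω))) P) :
    ∫ ω, ℓ (x - α • (g x + e ω)) ∂P
      ≤ ℓ x - α * ‖g x‖ ^ 2 + L / 2 * α ^ 2 * (‖g x‖ ^ 2 + ∫ ω, ‖e ω‖ ^ 2 ∂P) := by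
  have hlin : Integrable (fun ω => ⟪g x, g x + e ω⟫) P :=
    ((integrable_const (g x)).add he).const_inner (g x)
  have hquad : Integrable (fun ω => L / 2 * α ^ 2 * ‖g x + e ω‖ ^ 2) P :=
    (integrable_norm_add_sq (g x) he he2).const_mul _
  have hfirst : Integrable (fun ω => ℓ x - α * ⟪g x, g x + e ω⟫) P :=
    (integrable_const _).sub (hlin.const_mul α)
  calc ∫ ω, ℓ (x - α • (g x + e ω)) ∂P
      ≤ ∫ ω, (ℓ x - α * ⟪g x, g x + e ω⟫ + L / 2 * α ^ 2 * ‖g x + e ω‖ ^ 2) ∂P :=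
        integral_mono hint (hfirst.add hquad) fun ω => le_of_smooth_step hsmooth x (g x + e ω) α
    _ = ℓ x - α * ‖g x‖ ^ 2 + L / 2 * α ^ 2 * (‖g x‖ ^ 2 + ∫ ω, ‖e ω‖ ^ 2 ∂P) := by
        rw [integral_add hfirst hquad,
          integral_sub (integrable_const _) (hlin.const_mul α), integral_const_mul,
          integral_const_mul, integral_inner_add_of_integral_eq_zero (g x) he hemean,
          integral_norm_add_sq_of_integral_eq_zero (g x) he hemean he2]
        simp

end Descent

lemma one_add_sq_div_one_sub_sq {θ : ℝ} (hθ : θ ≠ 1) :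
    1 + θ ^ 2 / (1 - θ) ^ 2 = (θ ^ 2 + (1 - θ) ^ 2) / (1 - θ) ^ 2 := by
  have : (1 - θ) ^ 2 ≠ 0 := pow_ne_zero 2 (sub_ne_zero.mpr hθ.symm)
  field_simp
  ring

lemma half_le_sub_of_le_one_div_mul {α β L : ℝ} (hα0 : 0 < α) (hβL : 0 < β * L)
    (hα : α ≤ 1 / (β * L)) :
    α / 2 ≤ α - L / 2 * α ^ 2 * β := by
  have hαβL : α * (β * L) ≤ 1 := (le_div_iff₀ hβL).mp hα
  nlinarith

theorem big_batch_armijo_holds_general {d : ℕ} {Ω : Type*} [MeasurableSpace Ω]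
    (P : Measure Ω) [IsProbabilityMeasure P]
    (ℓ : EuclideanSpace ℝ (Fin d) → ℝ) (g : EuclideanSpace ℝ (Fin d) → EuclideanSpace ℝ (Fin d))
    (L : ℝ) (hL : 0 < L)
    (hsmooth : ∀ x y, ℓ x ≤ ℓ y + ⟪g y, x - y⟫ + L / 2 * ‖x - y‖ ^ 2)
    (θ : ℝ) (hθ : θ ∈ Set.Ioo (0 : ℝ) 1)
    (β : ℝ) (hβ : β = (θ ^ 2 + (1 - θ) ^ 2) / (1 - θ) ^ 2)
    (xt : EuclideanSpace ℝ (Fin d))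
    (e : Ω → EuclideanSpace ℝ (Fin d))
    (he : Integrable e P) (hemean : ∫ ω, e ω ∂P = 0)
    (he2 : Integrable (fun ω => ‖e ω‖ ^ 2) P)
    (hnoise : ∫ ω, ‖e ω‖ ^ 2 ∂P ≤ θ ^ 2 / (1 - θ) ^ 2 * ‖g xt‖ ^ 2)
    (α : ℝ) (hα0 : 0 < α) (hα : α ≤ 1 / (β * L))
    (c : ℝ) (hc : c ≤ 1 / 2)
    (hint : Integrable (fun ω => ℓ (xt - α • (g xt + e ω))) P) :
    ∫ ω, ℓ (xt - α • (g xt + e ω)) ∂P ≤ ℓ xt - c * α * ‖g xt‖ ^ 2 := by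
  have hβ_eq : β = 1 + θ ^ 2 / (1 - θ) ^ 2 := by
    rw [hβ, one_add_sq_div_one_sub_sq hθ.2.ne]
  have hβ_pos : 0 < β := by rw [hβ_eq]; positivity
  have hsecond : ‖g xt‖ ^ 2 + ∫ ω, ‖e ω‖ ^ 2 ∂P ≤ β * ‖g xt‖ ^ 2 := by
    rw [hβ_eq]; linarith
  have hstep := half_le_sub_of_le_one_div_mul hα0 (mul_pos hβ_pos hL) hα
  have hG : 0 ≤ α * ‖g xt‖ ^ 2 := by positivity
  calc ∫ ω, ℓ (xt - α • (g xt + e ω)) ∂P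
      ≤ ℓ xt - α * ‖g xt‖ ^ 2 + L / 2 * α ^ 2 * (‖g xt‖ ^ 2 + ∫ ω, ‖e ω‖ ^ 2 ∂P) :=
        integral_le_of_smooth_noisy_step hsmooth xt α he hemean he2 hint
    _ ≤ ℓ xt - α * ‖g xt‖ ^ 2 + L / 2 * α ^ 2 * (β * ‖g xt‖ ^ 2) := by gcongr
    _ = ℓ xt - (α - L / 2 * α ^ 2 * β) * ‖g xt‖ ^ 2 := by ring
    _ ≤ ℓ xt - c * α * ‖g xt‖ ^ 2 := by nlinarith

/-- Under `L`-smoothness, the PL inequality, and the big batch noise bound, any stepsize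
`0 < α ≤ 1/(βL)` satisfies the Armijo condition in expectation:
`E[ℓ(x_{t+1})] ≤ E[ℓ(x_t)] - c α E‖∇ℓ(x_t)‖²` for any `0 < c ≤ 1/2`. -/
theorem big_batch_armijo_holds {d : ℕ} {Ω : Type*} [MeasurableSpace Ω]
    (P : Measure Ω) [IsProbabilityMeasure P]
    (ℓ : EuclideanSpace ℝ (Fin d) → ℝ) (g : EuclideanSpace ℝ (Fin d) → EuclideanSpace ℝ (Fin d))
    (L mu : ℝ) (hL : 0 < L) (hmu : 0 < mu)
    (hsmooth : ∀ x y, ℓ x ≤ ℓ y + ⟪g y, x - y⟫ + L / 2 * ‖x - y‖ ^ 2)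
    (xstar : EuclideanSpace ℝ (Fin d)) (hmin : ∀ x, ℓ xstar ≤ ℓ x)
    (hPL : ∀ x, 2 * mu * (ℓ x - ℓ xstar) ≤ ‖g x‖ ^ 2)
    (θ : ℝ) (hθ : θ ∈ Set.Ioo (0 : ℝ) 1)
    (β : ℝ) (hβ : β = (θ ^ 2 + (1 - θ) ^ 2) / (1 - θ) ^ 2)
    (xt : EuclideanSpace ℝ (Fin d))
    (e : Ω → EuclideanSpace ℝ (Fin d))
    (he : Integrable e P) (hemean : ∫ ω, e ω ∂P = 0)
    (he2 : Integrable (fun ω => ‖e ω‖ ^ 2) P)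
    (hnoise : ∫ ω, ‖e ω‖ ^ 2 ∂P ≤ θ ^ 2 / (1 - θ) ^ 2 * ‖g xt‖ ^ 2)
    (α : ℝ) (hα0 : 0 < α) (hα : α ≤ 1 / (β * L))
    (c : ℝ) (hc0 : 0 < c) (hc : c ≤ 1 / 2)
    (hint : Integrable (fun ω => ℓ (xt - α • (g xt + e ω))) P) :
    ∫ ω, ℓ (xt - α • (g xt + e ω)) ∂P ≤ ℓ xt - c * α * ‖g xt‖ ^ 2 :=
  big_batch_armijo_holds_general P ℓ g L hL hsmooth θ hθ β hβ xt e he hemean he2 hnoise α hα0 hα c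
    hc hint
end

section
/- Under the same hypotheses (L-smooth, PL with constant μ, noise bound with parameter β), if a backtracking Armijo line search halves the stepsize whenever ℓ_B(x_t - α∇ℓ_B(x_t)) > ℓ_B(x_t) - cα||∇ℓ_B(x_t)||² fails, then every stepsize produced satisfies α_t = α_0 or α_t ≥ 1/(2βL), and consequently E[ℓ(x_{t+1}) - ℓ(x*)] ≤ (1 - 2cμ·min(α_0, 1/(2βL))) E[ℓ(x_t) - ℓ(x*)]. If α_0 ≥ 1/(2βL), the contraction factor is 1 - cμ/(βL). -/
open MeasureTheory
open scoped RealInnerProductSpace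

/-!
Averaging the smoothness upper bound at `x` over the zero-mean noise `e` gives
`E ℓ(x - a(∇ℓ x + e)) ≤ ℓ x - a‖∇ℓ x‖² + (L/2) a² (‖∇ℓ x‖² + E‖e‖²)`; with the noise bound
`E‖e‖² ≤ (β - 1)‖∇ℓ x‖²` this is the Armijo condition for every `a ≤ 1/(βL)` and `c ≤ 1/2`.
Backtracking only halves a stepsize that fails, hence one above `1/(βL)`, so the accepted
stepsize is `α₀` or at least `1/(2βL)`. The Armijo decrease combined with the PL inequality
then gives the linear rate.
-/

theorem integral_le_of_smooth_of_integral_eq_zero {E Ω : Type*} [NormedAddCommGroup E]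
    [InnerProductSpace ℝ E] [CompleteSpace E] [MeasurableSpace Ω] {P : Measure Ω}
    [IsProbabilityMeasure P] {ℓ : E → ℝ} {x v : E} {L a : ℝ}
    (hsmooth : ∀ y, ℓ y ≤ ℓ x + ⟪v, y - x⟫ + L / 2 * ‖y - x‖ ^ 2)
    {e : Ω → E} (he : Integrable e P) (hmean : ∫ ω, e ω ∂P = 0)
    (he2 : Integrable (fun ω => ‖e ω‖ ^ 2) P)
    (hint : Integrable (fun ω => ℓ (x - a • (v + e ω))) P) :
    ∫ ω, ℓ (x - a • (v + e ω)) ∂P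
      ≤ ℓ x - a * ‖v‖ ^ 2 + L / 2 * a ^ 2 * (‖v‖ ^ 2 + ∫ ω, ‖e ω‖ ^ 2 ∂P) := by
  set q : Ω → ℝ := fun ω =>
    (ℓ x - a * ‖v‖ ^ 2 + L / 2 * a ^ 2 * ‖v‖ ^ 2)
      + (L * a ^ 2 - a) * ⟪v, e ω⟫ + L / 2 * a ^ 2 * ‖e ω‖ ^ 2 with hq
  have hle : ∀ ω, ℓ (x - a • (v + e ω)) ≤ q ω := by
    intro ω
    have h := hsmooth (x - a • (v + e ω))
    rw [sub_sub_cancel_left, norm_neg, norm_smul, mul_pow, Real.norm_eq_abs, sq_abs,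
      norm_add_sq_real, inner_neg_right, real_inner_smul_right, inner_add_right,
      real_inner_self_eq_norm_sq] at h
    simp only [hq]
    linarith
  have hinner_int : Integrable (fun ω => (L * a ^ 2 - a) * ⟪v, e ω⟫) P :=
    (he.const_inner v).const_mul _
  have hlin_int : Integrable (fun ω =>
      (ℓ x - a * ‖v‖ ^ 2 + L / 2 * a ^ 2 * ‖v‖ ^ 2) + (L * a ^ 2 - a) * ⟪v, e ω⟫) P :=
    (integrable_const _).add hinner_int
  have hinner : ∫ ω, ⟪v, e ω⟫ ∂P = 0 := by
    rw [integral_inner he, hmean, inner_zero_right]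
  calc ∫ ω, ℓ (x - a • (v + e ω)) ∂P ≤ ∫ ω, q ω ∂P :=
        integral_mono hint (hlin_int.add (he2.const_mul _)) hle
    _ = ℓ x - a * ‖v‖ ^ 2 + L / 2 * a ^ 2 * (‖v‖ ^ 2 + ∫ ω, ‖e ω‖ ^ 2 ∂P) := by
      simp only [hq]
      rw [integral_add hlin_int (he2.const_mul _), integral_add (integrable_const _) hinner_int,
        integral_const, integral_const_mul, integral_const_mul, hinner, probReal_univ, one_smul]
      ring

theorem descent_bound_le_armijo {lx N V L a β c : ℝ} (hL : 0 ≤ L) (ha : 0 ≤ a) (hN : 0 ≤ N)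
    (hV : V ≤ (β - 1) * N) (haβL : a * (β * L) ≤ 1) (hc : c ≤ 1 / 2) :
    lx - a * N + L / 2 * a ^ 2 * (N + V) ≤ lx - c * a * N := by
  have haN : 0 ≤ a * N := mul_nonneg ha hN
  have hnoise : L / 2 * a ^ 2 * (N + V) ≤ L / 2 * a ^ 2 * (β * N) := by
    gcongr
    linarith
  have hstep : a * (β * L) * (a * N) ≤ a * N := by
    simpa using mul_le_mul_of_nonneg_right haβL haN
  have hc' : c * (a * N) ≤ 1 / 2 * (a * N) := mul_le_mul_of_nonneg_right hc haN
  nlinarith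

theorem backtracking_eq_or_half_le {A : ℝ → Prop} {τ α₀ : ℝ} (hα₀ : 0 < α₀)
    (hA : ∀ a, 0 < a → a ≤ τ → A a) {n : ℕ} (hfirst : ∀ m < n, ¬ A (α₀ / 2 ^ m)) :
    α₀ / 2 ^ n = α₀ ∨ τ / 2 ≤ α₀ / 2 ^ n := by
  cases n with
  | zero => exact Or.inl (by simp)
  | succ m =>
    have hrejected : τ < α₀ / 2 ^ m := by
      by_contra! hle
      exact hfirst m m.lt_succ_self (hA _ (by positivity) hle)
    right
    rw [pow_succ, ← div_div]
    linarith

theorem armijo_contraction {F lx lstar N c α m μ : ℝ} (hArmijo : F ≤ lx - c * α * N)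
    (hPL : 2 * μ * (lx - lstar) ≤ N) (hN : 0 ≤ N) (hc : 0 ≤ c) (hm : 0 ≤ m) (hmα : m ≤ α) :
    F - lstar ≤ (1 - 2 * c * μ * m) * (lx - lstar) := by
  have hα : c * m * N ≤ c * α * N := by gcongr
  have hPL' : c * m * (2 * μ * (lx - lstar)) ≤ c * m * N :=
    mul_le_mul_of_nonneg_left hPL (mul_nonneg hc hm)
  linarith

theorem big_batch_backtracking_general {d : ℕ} {Ω : Type*} [MeasurableSpace Ω]
    (P : Measure Ω) [IsProbabilityMeasure P]
    (ℓ : EuclideanSpace ℝ (Fin d) → ℝ) (g : EuclideanSpace ℝ (Fin d) → EuclideanSpace ℝ (Fin d))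
    (L mu : ℝ) (hL : 0 < L)
    (hsmooth : ∀ x y, ℓ x ≤ ℓ y + ⟪g y, x - y⟫ + L / 2 * ‖x - y‖ ^ 2)
    (xstar : EuclideanSpace ℝ (Fin d))
    (hPL : ∀ x, 2 * mu * (ℓ x - ℓ xstar) ≤ ‖g x‖ ^ 2)
    (θ : ℝ) (hθ : θ ∈ Set.Ioo (0 : ℝ) 1)
    (β : ℝ) (hβ : β = (θ ^ 2 + (1 - θ) ^ 2) / (1 - θ) ^ 2)
    (xt : EuclideanSpace ℝ (Fin d))
    (e : Ω → EuclideanSpace ℝ (Fin d))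
    (he : Integrable e P) (hemean : ∫ ω, e ω ∂P = 0)
    (he2 : Integrable (fun ω => ‖e ω‖ ^ 2) P)
    (hnoise : ∫ ω, ‖e ω‖ ^ 2 ∂P ≤ θ ^ 2 / (1 - θ) ^ 2 * ‖g xt‖ ^ 2)
    (c : ℝ) (hc0 : 0 < c) (hc : c ≤ 1 / 2)
    (hint : ∀ a : ℝ, Integrable (fun ω => ℓ (xt - a • (g xt + e ω))) P)
    -- the expected Armijo condition used by the line search
    (A : ℝ → Prop)
    (hA : ∀ a : ℝ, A a ↔
      ∫ ω, ℓ (xt - a • (g xt + e ω)) ∂P ≤ ℓ xt - c * a * ‖g xt‖ ^ 2)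
    (α0 : ℝ) (hα0 : 0 < α0)
    -- `αt` is produced by halving `α0` until the Armijo condition first holds
    (αt : ℝ) (n : ℕ) (hαt : αt = α0 / 2 ^ n) (hAαt : A αt)
    (hminimal : ∀ m : ℕ, m < n → ¬ A (α0 / 2 ^ m)) :
    (αt = α0 ∨ 1 / (2 * β * L) ≤ αt)
    ∧ (∫ ω, (ℓ (xt - αt • (g xt + e ω)) - ℓ xstar) ∂P
        ≤ (1 - 2 * c * mu * min α0 (1 / (2 * β * L))) * (ℓ xt - ℓ xstar))
    ∧ (1 / (2 * β * L) ≤ α0 →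
        ∫ ω, (ℓ (xt - αt • (g xt + e ω)) - ℓ xstar) ∂P
          ≤ (1 - c * mu / (β * L)) * (ℓ xt - ℓ xstar)) := by
  obtain ⟨-, hθ1⟩ := hθ
  have hvar : θ ^ 2 / (1 - θ) ^ 2 = β - 1 := by
    have : (1 - θ) ^ 2 ≠ 0 := pow_ne_zero 2 (by linarith)
    rw [hβ]; field_simp; ring
  have hβ1 : 1 ≤ β := by
    have := div_nonneg (sq_nonneg θ) (sq_nonneg (1 - θ))
    linarith
  have hβL : 0 < β * L := mul_pos (by linarith) hL
  have harmijo : ∀ a, 0 < a → a ≤ 1 / (β * L) → A a := fun a ha hle =>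
    (hA a).2 <| (integral_le_of_smooth_of_integral_eq_zero (hsmooth · xt) he hemean he2
      (hint a)).trans <| descent_bound_le_armijo hL.le ha.le (sq_nonneg _) (hvar ▸ hnoise)
        ((le_div_iff₀ hβL).1 hle) hc
  have hstep : αt = α0 ∨ 1 / (2 * β * L) ≤ αt := by
    rw [hαt, show 1 / (2 * β * L) = 1 / (β * L) / 2 by ring]
    exact backtracking_eq_or_half_le hα0 harmijo hminimal
  have hmin_le : min α0 (1 / (2 * β * L)) ≤ αt :=
    hstep.elim (fun h => h ▸ min_le_left _ _) ((min_le_right _ _).trans)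
  have hcontract : ∫ ω, (ℓ (xt - αt • (g xt + e ω)) - ℓ xstar) ∂P
      ≤ (1 - 2 * c * mu * min α0 (1 / (2 * β * L))) * (ℓ xt - ℓ xstar) := by
    rw [integral_sub (hint αt) (integrable_const _), integral_const, probReal_univ, one_smul]
    exact armijo_contraction ((hA αt).1 hAαt) (hPL xt) (sq_nonneg _) hc0.le
      (le_min hα0.le (by positivity)) hmin_le
  refine ⟨hstep, hcontract, fun hα0_ge => ?_⟩
  rwa [min_eq_right hα0_ge, show 2 * c * mu * (1 / (2 * β * L)) = c * mu / (β * L) by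
    field_simp] at hcontract

/-- Big batch SGD with backtracking Armijo line search: starting from `α₀` and halving
the stepsize until the (expected) Armijo condition holds, the accepted stepsize `αt`
satisfies `αt = α₀` or `αt ≥ 1/(2βL)`, and the expected optimality gap contracts by
`1 - 2cμ min(α₀, 1/(2βL))`; if `α₀ ≥ 1/(2βL)` the factor is `1 - cμ/(βL)`. -/
theorem big_batch_backtracking {d : ℕ} {Ω : Type*} [MeasurableSpace Ω]
    (P : Measure Ω) [IsProbabilityMeasure P]
    (ℓ : EuclideanSpace ℝ (Fin d) → ℝ) (g : EuclideanSpace ℝ (Fin d) → EuclideanSpace ℝ (Fin d))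
    (L mu : ℝ) (hL : 0 < L) (hmu : 0 < mu)
    (hsmooth : ∀ x y, ℓ x ≤ ℓ y + ⟪g y, x - y⟫ + L / 2 * ‖x - y‖ ^ 2)
    (xstar : EuclideanSpace ℝ (Fin d)) (hmin : ∀ x, ℓ xstar ≤ ℓ x)
    (hPL : ∀ x, 2 * mu * (ℓ x - ℓ xstar) ≤ ‖g x‖ ^ 2)
    (θ : ℝ) (hθ : θ ∈ Set.Ioo (0 : ℝ) 1)
    (β : ℝ) (hβ : β = (θ ^ 2 + (1 - θ) ^ 2) / (1 - θ) ^ 2)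
    (xt : EuclideanSpace ℝ (Fin d))
    (e : Ω → EuclideanSpace ℝ (Fin d))
    (he : Integrable e P) (hemean : ∫ ω, e ω ∂P = 0)
    (he2 : Integrable (fun ω => ‖e ω‖ ^ 2) P)
    (hnoise : ∫ ω, ‖e ω‖ ^ 2 ∂P ≤ θ ^ 2 / (1 - θ) ^ 2 * ‖g xt‖ ^ 2)
    (c : ℝ) (hc0 : 0 < c) (hc : c ≤ 1 / 2)
    (hint : ∀ a : ℝ, Integrable (fun ω => ℓ (xt - a • (g xt + e ω))) P)
    -- the expected Armijo condition used by the line search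
    (A : ℝ → Prop)
    (hA : ∀ a : ℝ, A a ↔
      ∫ ω, ℓ (xt - a • (g xt + e ω)) ∂P ≤ ℓ xt - c * a * ‖g xt‖ ^ 2)
    (α0 : ℝ) (hα0 : 0 < α0)
    -- `αt` is produced by halving `α0` until the Armijo condition first holds
    (αt : ℝ) (n : ℕ) (hαt : αt = α0 / 2 ^ n) (hAαt : A αt)
    (hminimal : ∀ m : ℕ, m < n → ¬ A (α0 / 2 ^ m)) :
    (αt = α0 ∨ 1 / (2 * β * L) ≤ αt)
    ∧ (∫ ω, (ℓ (xt - αt • (g xt + e ω)) - ℓ xstar) ∂P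
        ≤ (1 - 2 * c * mu * min α0 (1 / (2 * β * L))) * (ℓ xt - ℓ xstar))
    ∧ (1 / (2 * β * L) ≤ α0 →
        ∫ ω, (ℓ (xt - αt • (g xt + e ω)) - ℓ xstar) ∂P
          ≤ (1 - c * mu / (β * L)) * (ℓ xt - ℓ xstar)) :=
  big_batch_backtracking_general P ℓ g L mu hL hsmooth xstar hPL θ hθ β hβ xt e he hemean he2 hnoise
    c hc0 hc hint A hA α0 hα0 αt n hαt hAαt hminimal
end

section
/- With β = (θ²+(1-θ)²)/(1-θ)², μ-PL, L-smooth, condition number κ = L/μ, and stepsize α ∈ [(1-θ²)/L, (1-θ²)/μ], the contraction factor 1 - 2μα + Lα²βμ is bounded above by 1 - 2(1-θ²)/κ + β(1-θ²)²κ, and this bound is strictly less than 1 whenever κ² < 2/(β(1-θ²)). -/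
/-- With `β = (θ² + (1-θ)²)/(1-θ)²`, condition number `κ = L/μ`, and any stepsize
`α ∈ [(1-θ²)/L, (1-θ²)/μ]`, the contraction factor `1 - 2μα + Lα²βμ` is at most
`1 - 2(1-θ²)/κ + β(1-θ²)²κ`, which is strictly less than `1` whenever
`κ² < 2/(β(1-θ²))`. -/
theorem bb_adaptive_contraction (θ mu L α : ℝ) (hθ : θ ∈ Set.Ioo (0 : ℝ) 1)
    (hmu : 0 < mu) (hmuL : mu ≤ L)
    (β κ : ℝ) (hβ : β = (θ ^ 2 + (1 - θ) ^ 2) / (1 - θ) ^ 2) (hκ : κ = L / mu)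
    (hα₁ : (1 - θ ^ 2) / L ≤ α) (hα₂ : α ≤ (1 - θ ^ 2) / mu) :
    1 - 2 * mu * α + L * α ^ 2 * β * mu
        ≤ 1 - 2 * (1 - θ ^ 2) / κ + β * (1 - θ ^ 2) ^ 2 * κ
    ∧ (κ ^ 2 < 2 / (β * (1 - θ ^ 2)) →
        1 - 2 * (1 - θ ^ 2) / κ + β * (1 - θ ^ 2) ^ 2 * κ < 1) := by
  obtain ⟨hθ0, hθ1⟩ := hθ
  have hL : 0 < L := lt_of_lt_of_le hmu hmuL
  have hc : 0 < 1 - θ ^ 2 := by nlinarith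
  have h1θ : 0 < (1 - θ) ^ 2 := by nlinarith
  have hβpos : 0 < β := by
    rw [hβ]; exact div_pos (by nlinarith) h1θ
  have hκpos : 0 < κ := by rw [hκ]; positivity
  have h1 : 1 - θ ^ 2 ≤ α * L := (div_le_iff₀ hL).mp hα₁
  have h2 : α * mu ≤ 1 - θ ^ 2 := (le_div_iff₀ hmu).mp hα₂
  have hαpos : 0 < α := lt_of_lt_of_le (by positivity) hα₁
  have e1 : 2 * (1 - θ ^ 2) / κ = 2 * (1 - θ ^ 2) * mu / L := by
    rw [hκ]; field_simp
  have e2 : β * (1 - θ ^ 2) ^ 2 * κ = β * (1 - θ ^ 2) ^ 2 * L / mu := by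
    rw [hκ]; ring
  constructor
  · rw [e1, e2]
    have A : 2 * (1 - θ ^ 2) * mu / L ≤ 2 * mu * α := by
      rw [div_le_iff₀ hL]; nlinarith
    have B : L * α ^ 2 * β * mu ≤ β * (1 - θ ^ 2) ^ 2 * L / mu := by
      rw [le_div_iff₀ hmu]
      nlinarith [mul_self_le_mul_self (by positivity : (0:ℝ) ≤ α * mu) h2,
        mul_pos hβpos hL]
    linarith
  · intro h
    have hbc : 0 < β * (1 - θ ^ 2) := by positivity
    have h' : κ ^ 2 * (β * (1 - θ ^ 2)) < 2 := (lt_div_iff₀ hbc).mp h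
    have : β * (1 - θ ^ 2) ^ 2 * κ < 2 * (1 - θ ^ 2) / κ := by
      rw [lt_div_iff₀ hκpos]; nlinarith
    linarith
end
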